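/- arXiv:cs/0607009 — 2 statements merged into one kernel-verified Lean document; each statement's English description precedes it below -/
import Mathlib

section
/- If h : Σ* → Δ* is a monoid homomorphism, ω is strongly almost periodic, and h(ω) = h(ω(0))h(ω(1))h(ω(2))⋯ is an infinite sequence, then h(ω) is strongly almost periodic. -/
/-- The factor of `ω` starting at `i` of length `n`. -/
def seg {α : Type*} (ω : ℕ → α) (i n : ℕ) : List α :=
  (List.range n).map (fun k => ω (i + k))

/-- `x` occurs in `ω` at position `i`. -/
def OccursAt {α : Type*} (ω : ℕ → α) (x : List α) (i : ℕ) : Prop :=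
  seg ω i x.length = x

/-- Strongly almost periodic: every factor occurs in every sufficiently long factor. -/
def SAP {α : Type*} (ω : ℕ → α) : Prop :=
  ∀ x : List α, (∃ i, OccursAt ω x i) →
    ∃ l, ∀ j, ∃ i, j ≤ i ∧ i + x.length ≤ j + l ∧ OccursAt ω x i

/-- Almost periodic: every factor occurring infinitely often occurs in every
sufficiently long factor. -/
def AP {α : Type*} (ω : ℕ → α) : Prop :=
  ∀ x : List α, {i | OccursAt ω x i}.Infinite →
    ∃ l, ∀ j, ∃ i, j ≤ i ∧ i + x.length ≤ j + l ∧ OccursAt ω x i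

/-- Eventually strongly almost periodic: some suffix is strongly almost periodic. -/
def EAP {α : Type*} (ω : ℕ → α) : Prop :=
  ∃ n, SAP (fun i => ω (n + i))


section SegAux
variable {α β : Type*}

lemma seg_length (ω : ℕ → α) (a n : ℕ) : (seg ω a n).length = n := by
  simp [seg]

lemma seg_add (ω : ℕ → α) (a m k : ℕ) :
    seg ω a (m + k) = seg ω a m ++ seg ω (a + m) k := by
  simp only [seg, List.range_add, List.map_append, List.map_map]
  congr 1
  apply List.map_congr_left
  intro j _
  simp [Function.comp]
  ring_nf

lemma seg_one (ω : ℕ → α) (a : ℕ) : seg ω a 1 = [ω a] := by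
  simp [seg, List.range_succ]

lemma seg_extract (ν : ℕ → β) (A p m L : ℕ) (hpm : p + m ≤ L) :
    seg ν (A + p) m = ((seg ν A L).drop p).take m := by
  obtain ⟨r, rfl⟩ : ∃ r, L = p + (m + r) := ⟨L - p - m, by omega⟩
  rw [seg_add, seg_add, List.drop_left' (seg_length ν A p),
    List.take_left' (seg_length ν (A + p) m)]

end SegAux

/-- An erasing-allowed homomorphism of a strongly almost periodic sequence, if infinite,
is strongly almost periodic. `ν` is the infinite word `h(ω(0))h(ω(1))⋯`:
every prefix of `ν` of length `|h(ω[0,n))|` equals `h(ω[0,n))`, and these lengths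
are unbounded. -/


theorem sap_homomorphism {Sig Del : Type*} [Finite Sig] [Finite Del]
    (h : List Sig → List Del) (hhom : ∀ u v : List Sig, h (u ++ v) = h u ++ h v)
    (ω : ℕ → Sig) (hω : SAP ω) (ν : ℕ → Del)
    (hpre : ∀ n, seg ν 0 (h (seg ω 0 n)).length = h (seg ω 0 n))
    (hinf : ∀ m, ∃ n, m ≤ (h (seg ω 0 n)).length) :
    SAP ν := by
  classical
  have _inst := Fintype.ofFinite Sig
  set C := (Finset.univ : Finset Sig).sup (fun a => (h [a]).length) with hCdef
  have hhC : ∀ a : Sig, (h [a]).length ≤ C := by intro a; rw [hCdef]; exact Finset.le_sup (f := fun a => (h [a]).length) (Finset.mem_univ a)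
  set f : ℕ → ℕ := fun n => (h (seg ω 0 n)).length with hfdef
  have hnil : h ([] : List Sig) = [] := by
    have h2 := hhom [] []
    simp only [List.nil_append] at h2
    have : (h ([] : List Sig)).length = 0 := by
      have h3 := congrArg List.length h2
      rw [List.length_append] at h3
      omega
    exact List.length_eq_zero_iff.mp this
  have hf0 : f 0 = 0 := by simp [hfdef, seg, hnil]
  have fadd : ∀ i m, f (i + m) = f i + (h (seg ω i m)).length := by
    intro i m
    have : seg ω 0 (i + m) = seg ω 0 i ++ seg ω i m := by
      have := seg_add ω 0 i m
      rwa [Nat.zero_add] at this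
    simp [hfdef, this, hhom]
  have fmono : ∀ {a b : ℕ}, a ≤ b → f a ≤ f b := by
    intro a b hab
    obtain ⟨m, rfl⟩ := Nat.exists_eq_add_of_le hab
    rw [fadd]; omega
  have fstep : ∀ k, f (k + 1) = f k + (h [ω k]).length := by
    intro k
    rw [fadd, seg_one]
  have fbound : ∀ k m, f (k + m) ≤ f k + m * C := by
    intro k m
    induction m with
    | zero => simp
    | succ m ih =>
      have h1 : f (k + (m + 1)) = f (k + m) + (h [ω (k + m)]).length := by
        rw [← Nat.add_assoc, fstep]
      have h2 := hhC (ω (k + m))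
      have : (m + 1) * C = m * C + C := by ring
      omega
  intro x hx
  obtain ⟨p, hp⟩ := hx
  obtain ⟨n, hn⟩ := hinf (p + x.length)
  change p + x.length ≤ f n at hn
  obtain ⟨l, hl⟩ := hω (seg ω 0 n) ⟨0, by simp [OccursAt, seg_length]⟩
  refine ⟨C + l * C, ?_⟩
  intro j
  have hex : ∃ m, j ≤ f m := hinf j
  set n₀ := Nat.find hex with hn₀def
  have hn₀ : j ≤ f n₀ := Nat.find_spec hex
  have hn₀le : f n₀ ≤ j + C := by
    rcases Nat.eq_zero_or_pos n₀ with h0 | h0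
    · rw [h0, hf0]; omega
    · have hlt : ¬ j ≤ f (n₀ - 1) := Nat.find_min hex (by omega)
      have hb := fbound (n₀ - 1) 1
      rw [Nat.sub_add_cancel h0] at hb
      omega
  obtain ⟨i, hi1, hi2, hi3⟩ := hl n₀
  rw [seg_length] at hi2
  unfold OccursAt at hi3
  rw [seg_length] at hi3
  -- hi3 : seg ω i n = seg ω 0 n
  have hfn : f n = (h (seg ω i n)).length := by rw [hi3]
  have h2 : f (i + n) = f i + f n := by rw [fadd, hfn]
  have hkey : seg ν (f i) (f n) = seg ν 0 (f n) := by
    have hp1 : seg ν 0 (f (i + n)) = h (seg ω 0 (i + n)) := hpre (i + n)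
    have hsplit : seg ω 0 (i + n) = seg ω 0 i ++ seg ω i n := by
      have := seg_add ω 0 i n
      rwa [Nat.zero_add] at this
    have hp2 : seg ν 0 (f i + f n) = seg ν 0 (f i) ++ seg ν (f i) (f n) := by
      have := seg_add ν 0 (f i) (f n)
      rwa [Nat.zero_add] at this
    have heq : seg ν 0 (f i) ++ seg ν (f i) (f n)
        = h (seg ω 0 i) ++ h (seg ω i n) := by
      rw [← hp2, ← h2, hp1, hsplit, hhom]
    have hlen : (seg ν 0 (f i)).length = (h (seg ω 0 i)).length := by
      rw [seg_length]
    have := (List.append_inj heq hlen).2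
    rw [this, hi3, hpre n]
  refine ⟨f i + p, ?_, ?_, ?_⟩
  · have := fmono hi1
    omega
  · have h3 : f (i + n) ≤ f (n₀ + l) := fmono hi2
    have h4 : f (n₀ + l) ≤ f n₀ + l * C := fbound n₀ l
    omega
  · unfold OccursAt
    unfold OccursAt at hp
    have e1 : seg ν (f i + p) x.length = ((seg ν (f i) (f n)).drop p).take x.length :=
      seg_extract ν (f i) p x.length (f n) hn
    have e2 : seg ν (0 + p) x.length = ((seg ν 0 (f n)).drop p).take x.length :=
      seg_extract ν 0 p x.length (f n) hn
    rw [Nat.zero_add] at e2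
    rw [e1, hkey, ← e2, hp]
end

section
/- Both 0·ω_T and 1·ω_T (the Thue–Morse sequence with one symbol prepended) are strongly almost periodic. -/
/-- Prefixes of the Thue--Morse sequence: `a_0 = 0`, `a_{n+1} = a_n · (complement of a_n)`. -/
def tmPrefix : ℕ → List Bool
  | 0 => [false]
  | n + 1 => tmPrefix n ++ (tmPrefix n).map (fun b => !b)

/-- The Thue--Morse sequence, the pointwise limit of the prefixes `tmPrefix n`. -/
def thueMorse (i : ℕ) : Bool := (tmPrefix (i + 1)).getD i false

/-- The sequence `b·ω` obtained by prepending the symbol `b` to `ω`. -/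
def prepend {α : Type*} (b : α) (ω : ℕ → α) : ℕ → α
  | 0 => b
  | n + 1 => ω n

/-!
Writing `t` for the Thue–Morse sequence, `t (2 ^ m * q + k) = xor (t q) (t k)` for `k < 2 ^ m`.
Hence a factor of length `n` at position `2 ^ n * q + r` (`r < 2 ^ n`) is determined by `r` and
the pair `(t q, t (q + 1))`; as every pair of letters recurs in every window of length 16, `t` is
strongly almost periodic. Prepending `b` only adds the factors `b · a` with `a` a prefix of `t`,
and these occur in `t` where a block of length `2 ^ n` ending in `b` is followed by a block `q`
with `t q = 0`, which repeats the first `2 ^ n` letters of `t`.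
-/

section Words

variable {α : Type*}

@[simp]
lemma length_seg (ω : ℕ → α) (i n : ℕ) : (seg ω i n).length = n := by
  simp [seg]

@[simp]
lemma getElem_seg (ω : ℕ → α) (i n k : ℕ) (hk : k < (seg ω i n).length) :
    (seg ω i n)[k] = ω (i + k) := by
  simp [seg]

lemma occursAt_iff {ω : ℕ → α} {x : List α} {i : ℕ} :
    OccursAt ω x i ↔ ∀ k (hk : k < x.length), ω (i + k) = x[k] := by
  refine ⟨fun h k hk => ?_, fun h => List.ext_getElem (length_seg ..) fun k _ hk => ?_⟩
  · simpa using (List.getElem_of_eq h.symm hk).symm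
  · simpa using h k hk

lemma OccursAt.of_forall_eq {ω : ℕ → α} {x : List α} {i i' : ℕ} (h : OccursAt ω x i)
    (h' : ∀ k < x.length, ω (i' + k) = ω (i + k)) : OccursAt ω x i' :=
  occursAt_iff.2 fun k hk => (h' k hk).trans (occursAt_iff.1 h k hk)

lemma seg_prepend_succ (b : α) (ω : ℕ → α) (i n : ℕ) :
    seg (prepend b ω) (i + 1) n = seg ω i n := by
  simp only [seg, Nat.add_right_comm i 1, prepend]

lemma seg_prepend_zero_succ (b : α) (ω : ℕ → α) (n : ℕ) :
    seg (prepend b ω) 0 (n + 1) = b :: seg ω 0 n := by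
  simp [seg, List.range_succ_eq_map, prepend]

lemma occursAt_prepend_succ {b : α} {ω : ℕ → α} {x : List α} {i : ℕ} :
    OccursAt (prepend b ω) x (i + 1) ↔ OccursAt ω x i := by
  rw [OccursAt, OccursAt, seg_prepend_succ]

/-- The words `b :: seg ω 0 n` are the only factors that `prepend b ω` may add to those of
`ω`. -/
theorem SAP.prepend {ω : ℕ → α} (hω : SAP ω) {b : α}
    (hb : ∀ n, ∃ i, OccursAt ω (b :: seg ω 0 n) i) : SAP (prepend b ω) := by
  rintro x ⟨i, hi⟩
  have hx : ∃ i, OccursAt ω x i := by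
    rcases i with _ | i
    · rcases x with _ | ⟨a, x⟩
      · exact ⟨0, rfl⟩
      · rw [OccursAt, List.length_cons, seg_prepend_zero_succ] at hi
        rw [← hi]
        exact hb _
    · exact ⟨i, occursAt_prepend_succ.1 hi⟩
  obtain ⟨l, hl⟩ := hω x hx
  refine ⟨l + 1, fun j => ?_⟩
  obtain ⟨i, hji, hil, hocc⟩ := hl j
  exact ⟨i + 1, by omega, by omega, occursAt_prepend_succ.2 hocc⟩

end Words

lemma List.getElem?_flatMap_pair_two_mul {α β : Type*} (f g : α → β) (l : List α) (i : ℕ) :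
    (l.flatMap fun a => [f a, g a])[2 * i]? = l[i]?.map f := by
  induction l generalizing i with
  | nil => simp
  | cons a l ih => cases i <;> simp [Nat.mul_succ, ih]

lemma List.getElem?_flatMap_pair_two_mul_add_one {α β : Type*} (f g : α → β) (l : List α)
    (i : ℕ) : (l.flatMap fun a => [f a, g a])[2 * i + 1]? = l[i]?.map g := by
  induction l generalizing i with
  | nil => simp
  | cons a l ih => cases i <;> simp [Nat.mul_succ, ih]

lemma lt_two_pow_succ (i : ℕ) : i < 2 ^ (i + 1) := by
  have := Nat.lt_two_pow_self (n := i)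
  rw [pow_succ]
  omega

lemma length_tmPrefix (m : ℕ) : (tmPrefix m).length = 2 ^ m := by
  induction m with
  | zero => rfl
  | succ m ih => simp [tmPrefix, ih, pow_succ, mul_two]

lemma tmPrefix_succ_eq_flatMap (m : ℕ) :
    tmPrefix (m + 1) = (tmPrefix m).flatMap fun b => [b, !b] := by
  induction m with
  | zero => rfl
  | succ m ih =>
    conv_rhs => rw [tmPrefix]
    rw [tmPrefix, ih, List.flatMap_append, List.map_flatMap, List.flatMap_map]
    simp

lemma tmPrefix_prefix_of_le {k m : ℕ} (h : k ≤ m) : tmPrefix k <+: tmPrefix m := by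
  induction m, h using Nat.le_induction with
  | base => exact List.prefix_rfl
  | succ m _ ih => exact ih.trans (List.prefix_append _ _)

lemma getElem?_tmPrefix {i m : ℕ} (h : i < 2 ^ m) : (tmPrefix m)[i]? = some (thueMorse i) := by
  have restrict : ∀ {k m}, k ≤ m → i < 2 ^ k → (tmPrefix m)[i]? = (tmPrefix k)[i]? :=
    fun hkm hi => by
      rw [List.prefix_iff_getElem?.1 (tmPrefix_prefix_of_le hkm) i (by rwa [length_tmPrefix]),
        List.getElem?_eq_getElem]
  have hi := lt_two_pow_succ i
  have self : (tmPrefix (i + 1))[i]? = some (thueMorse i) := by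
    rw [thueMorse, List.getD_eq_getElem?_getD, List.getElem?_eq_getElem (by rwa [length_tmPrefix])]
    rfl
  rcases le_total m (i + 1) with hm | hm
  · rw [← restrict hm h, self]
  · rw [restrict hm hi, self]

lemma thueMorse_two_mul (i : ℕ) : thueMorse (2 * i) = thueMorse i := by
  have hi := lt_two_pow_succ i
  have h := getElem?_tmPrefix (i := 2 * i) (m := i + 2) (by rw [pow_succ]; omega)
  rw [tmPrefix_succ_eq_flatMap, List.getElem?_flatMap_pair_two_mul (fun b => b),
    getElem?_tmPrefix hi] at h
  simpa using h.symm

lemma thueMorse_two_mul_add_one (i : ℕ) : thueMorse (2 * i + 1) = !thueMorse i := by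
  have hi := lt_two_pow_succ i
  have h := getElem?_tmPrefix (i := 2 * i + 1) (m := i + 2) (by rw [pow_succ]; omega)
  rw [tmPrefix_succ_eq_flatMap, List.getElem?_flatMap_pair_two_mul_add_one (fun b => b),
    getElem?_tmPrefix hi] at h
  simpa using h.symm

lemma thueMorse_two_pow_mul_add (m q : ℕ) {k : ℕ} (hk : k < 2 ^ m) :
    thueMorse (2 ^ m * q + k) = xor (thueMorse q) (thueMorse k) := by
  induction m generalizing k with
  | zero =>
    obtain rfl := Nat.lt_one_iff.1 hk
    simp [show thueMorse 0 = false from rfl]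
  | succ m ih =>
    obtain ⟨k, rfl | rfl⟩ := Nat.even_or_odd' k
    · rw [show 2 ^ (m + 1) * q + 2 * k = 2 * (2 ^ m * q + k) by ring, thueMorse_two_mul,
        thueMorse_two_mul, ih (by rw [pow_succ] at hk; omega)]
    · rw [show 2 ^ (m + 1) * q + (2 * k + 1) = 2 * (2 ^ m * q + k) + 1 by ring,
        thueMorse_two_mul_add_one, thueMorse_two_mul_add_one, ih (by rw [pow_succ] at hk; omega),
        Bool.xor_not]

lemma thueMorse_two_pow_mul_add_eq {m q q' k : ℕ} (h₀ : thueMorse q = thueMorse q')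
    (h₁ : thueMorse (q + 1) = thueMorse (q' + 1)) (hk : k < 2 * 2 ^ m) :
    thueMorse (2 ^ m * q + k) = thueMorse (2 ^ m * q' + k) := by
  rcases lt_or_ge k (2 ^ m) with hk' | hk'
  · rw [thueMorse_two_pow_mul_add m q hk', thueMorse_two_pow_mul_add m q' hk', h₀]
  · obtain ⟨k, rfl⟩ := Nat.exists_eq_add_of_le hk'
    rw [← add_assoc, ← add_assoc, ← mul_add_one, ← mul_add_one,
      thueMorse_two_pow_mul_add m _ (by omega), thueMorse_two_pow_mul_add m _ (by omega), h₁]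

lemma exists_thueMorse_eq (b : Bool) (j : ℕ) :
    ∃ t, j ≤ t ∧ t ≤ j + 2 ∧ thueMorse t = b := by
  by_cases h : thueMorse ((j + 1) / 2) = b
  · exact ⟨2 * ((j + 1) / 2), by omega, by omega, by rwa [thueMorse_two_mul]⟩
  · exact ⟨2 * ((j + 1) / 2) + 1, by omega, by omega, by
      rw [thueMorse_two_mul_add_one]; cases b <;> simpa using h⟩

lemma exists_thueMorse_eq_not (b : Bool) (j : ℕ) :
    ∃ t, j ≤ t ∧ t ≤ j + 6 ∧ thueMorse t = b ∧ thueMorse (t + 1) = !b := by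
  obtain ⟨t, hj, ht, hb⟩ := exists_thueMorse_eq b ((j + 1) / 2)
  exact ⟨2 * t, by omega, by omega, by rwa [thueMorse_two_mul],
    by rw [thueMorse_two_mul_add_one, hb]⟩

lemma exists_thueMorse_eq_eq (b : Bool) (j : ℕ) :
    ∃ t, j ≤ t ∧ t ≤ j + 14 ∧ thueMorse t = b ∧ thueMorse (t + 1) = b := by
  obtain ⟨t, hj, ht, hb, hb'⟩ := exists_thueMorse_eq_not (!b) ((j + 1) / 2)
  refine ⟨2 * t + 1, by omega, by omega, ?_, ?_⟩
  · rw [thueMorse_two_mul_add_one, hb, Bool.not_not]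
  · rw [show 2 * t + 1 + 1 = 2 * (t + 1) by ring, thueMorse_two_mul, hb', Bool.not_not]

lemma exists_thueMorse_pair (a b : Bool) (j : ℕ) :
    ∃ t, j ≤ t ∧ t ≤ j + 14 ∧ thueMorse t = a ∧ thueMorse (t + 1) = b := by
  obtain rfl | rfl := Bool.eq_or_eq_not b a
  · exact exists_thueMorse_eq_eq b j
  · obtain ⟨t, hj, ht, h⟩ := exists_thueMorse_eq_not a j
    exact ⟨t, hj, by omega, h⟩

theorem sap_thueMorse : SAP thueMorse := by
  rintro x ⟨p, hp⟩
  set M := 2 ^ x.length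
  have hM : 0 < M := by positivity
  have hlen : x.length < M := Nat.lt_two_pow_self
  have hr : p % M < M := Nat.mod_lt p hM
  refine ⟨17 * M, fun j => ?_⟩
  obtain ⟨s, hjs, hs, h₀, h₁⟩ :=
    exists_thueMorse_pair (thueMorse (p / M)) (thueMorse (p / M + 1)) (j / M + 1)
  refine ⟨M * s + p % M, ?_, ?_, hp.of_forall_eq fun k hk => ?_⟩
  · exact (Nat.lt_mul_div_succ j hM).le.trans ((Nat.mul_le_mul_left M hjs).trans le_self_add)
  · nlinarith [Nat.mul_div_le j M, Nat.mul_le_mul_left M hs]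
  · conv_rhs => rw [← Nat.div_add_mod p M]
    rw [add_assoc, add_assoc]
    exact thueMorse_two_pow_mul_add_eq h₀ h₁ (by omega)

/-- The stretch `seg thueMorse 0 n` recurs at the start of every block `q + 1` of length `2 ^ n`
with `thueMorse (q + 1) = false`; pick such a block right after one ending in `b`. -/
lemma exists_occursAt_cons_seg_thueMorse (b : Bool) (n : ℕ) :
    ∃ i, OccursAt thueMorse (b :: seg thueMorse 0 n) i := by
  obtain ⟨q, -, -, hq, hq₁⟩ := exists_thueMorse_pair (xor b (thueMorse (2 ^ n - 1))) false 0
  have hn : n < 2 ^ n := Nat.lt_two_pow_self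
  refine ⟨2 ^ n * q + (2 ^ n - 1), occursAt_iff.2 fun k hk => ?_⟩
  rcases k with _ | k
  · rw [add_zero, thueMorse_two_pow_mul_add n q (by omega), hq]
    simp
  · simp only [List.length_cons, length_seg] at hk
    rw [show 2 ^ n * q + (2 ^ n - 1) + (k + 1) = 2 ^ n * (q + 1) + k by rw [mul_add_one]; omega,
      thueMorse_two_pow_mul_add n _ (by omega), hq₁]
    simp

/-- Both `0·ω_T` and `1·ω_T` are strongly almost periodic. -/
theorem sap_prepend_thueMorse :
    SAP (prepend false thueMorse) ∧ SAP (prepend true thueMorse) :=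
  ⟨sap_thueMorse.prepend (exists_occursAt_cons_seg_thueMorse false),
    sap_thueMorse.prepend (exists_occursAt_cons_seg_thueMorse true)⟩
end
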